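/- Let X carry an action of the group of finitary permutations of an infinite type 𝔸 with decidable equality, and let x ∈ X. If (Aᵢ)_{i ∈ I} is a nonempty family of finite supports of x, then ⋂_{i ∈ I} Aᵢ is also a finite support of x. -/

import Mathlib

/-- The subgroup of finitary permutations of `𝔸`: permutations moving
only finitely many elements. -/
def FinPerm (𝔸 : Type*) : Subgroup (Equiv.Perm 𝔸) where
  carrier := {π : Equiv.Perm 𝔸 | {a | π a ≠ a}.Finite}
  one_mem' := by simp
  mul_mem' := by
    intro π σ hπ hσ
    refine (hπ.union hσ).subset ?_
    intro a ha
    by_contra h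
    simp only [Set.mem_union, Set.mem_setOf_eq, not_or, not_not] at h
    exact ha (by simp [Equiv.Perm.mul_apply, h.1, h.2])
  inv_mem' := by
    intro π hπ
    refine hπ.subset ?_
    intro a ha
    simp only [Set.mem_setOf_eq] at *
    intro h
    exact ha (by nth_rewrite 1 [← h]; exact Equiv.symm_apply_apply π a)

/-- `A` supports `x`: every finitary permutation fixing `A` pointwise fixes `x`. -/
def NSupports (𝔸 : Type*) {X : Type*} [MulAction (FinPerm 𝔸) X] (A : Set 𝔸) (x : X) : Prop :=
  ∀ π : FinPerm 𝔸, (∀ a ∈ A, π.1 a = a) → π • x = x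

/-! A set `A` supports `x` as soon as every transposition of two elements outside `A` fixes `x`,
because a finitary permutation fixing `A` pointwise is a product of such transpositions. Given
two supports `A`, `B` and a name `c` outside both, any `a, b ∉ A ∩ B` satisfy
`swap a b = swap a c * swap c b * swap a c`, where each factor fixes `x` because of `A` or of `B`;
so `A ∩ B` is again a support. Finally, the supports containing `⋂ i, A i` inside the finite set
`A i₀` form a finite family closed under intersecting with each `A i`, and a minimal member of it
is `⋂ i, A i`. -/

open Equiv MulAction

theorem Set.Finite.iInter_of_forall_inter {α I : Type*} {P : Set α → Prop} {A : I → Set α}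
    {i₀ : I} (hfin : (A i₀).Finite) (hA : ∀ i, P (A i))
    (hinter : ∀ s ⊆ A i₀, P s → ∀ i, P (s ∩ A i)) : P (⋂ i, A i) := by
  let 𝒮 : Set (Set α) := {s | s ⊆ A i₀ ∧ (⋂ i, A i) ⊆ s ∧ P s}
  have h𝒮 : 𝒮.Finite := hfin.finite_subsets.subset fun s hs ↦ hs.1
  obtain ⟨s, -, ⟨hs₀, hss, hPs⟩, hmin⟩ :=
    h𝒮.exists_le_minimal (a := A i₀) ⟨subset_rfl, Set.iInter_subset A i₀, hA i₀⟩
  have : s ⊆ ⋂ i, A i := Set.subset_iInter fun i ↦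
    (hmin ⟨Set.inter_subset_left.trans hs₀, Set.subset_inter hss (Set.iInter_subset A i),
      hinter s hs₀ hPs i⟩ Set.inter_subset_left).trans Set.inter_subset_right
  exact hss.antisymm this ▸ hPs

namespace FinPerm

variable {𝔸 X : Type*} [MulAction (FinPerm 𝔸) X]

theorem swap_mem [DecidableEq 𝔸] (a b : 𝔸) : swap a b ∈ FinPerm 𝔸 :=
  finite_compl_fixedBy_swap

def stabilizerPerm (x : X) : Subgroup (Perm 𝔸) :=
  (stabilizer (FinPerm 𝔸) x).map (FinPerm 𝔸).subtype

theorem mem_stabilizerPerm {x : X} {π : FinPerm 𝔸} : π.1 ∈ stabilizerPerm x ↔ π • x = x :=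
  Subgroup.mem_map_iff_mem Subtype.val_injective

end FinPerm

section Supports

open FinPerm

variable {𝔸 X : Type*} [DecidableEq 𝔸] [MulAction (FinPerm 𝔸) X] {A B : Set 𝔸} {x : X}

theorem NSupports.swap_mem_stabilizerPerm (hA : NSupports 𝔸 A x) {a b : 𝔸} (ha : a ∉ A)
    (hb : b ∉ A) : swap a b ∈ stabilizerPerm x :=
  mem_stabilizerPerm (π := ⟨swap a b, swap_mem a b⟩).2 <| hA _ fun _ hc ↦
    swap_apply_of_ne_of_ne (ne_of_mem_of_not_mem hc ha) (ne_of_mem_of_not_mem hc hb)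

theorem nsupports_of_swap_mem_stabilizerPerm
    (h : ∀ a ∉ A, ∀ b ∉ A, swap a b ∈ stabilizerPerm x) : NSupports 𝔸 A x := by
  intro π hπ
  let S : Set (Perm 𝔸) := {σ | ∃ a ∉ A, ∃ b ∉ A, a ≠ b ∧ σ = swap a b}
  have hS : ∀ σ ∈ S, σ.IsSwap := fun σ ⟨a, _, b, _, hab, hσ⟩ ↦ ⟨a, b, hab, hσ⟩
  have hSle : Subgroup.closure S ≤ stabilizerPerm x :=
    (Subgroup.closure_le _).2 fun σ ⟨a, ha, b, hb, _, hσ⟩ ↦ hσ ▸ h a ha b hb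
  -- `π` maps `Aᶜ` into itself, so `π a` is one generator away from `a`
  have horbit : ∀ a, π.1 a ∈ orbit (Subgroup.closure S) a := by
    intro a
    by_cases ha : a ∈ A
    · rw [hπ a ha]; exact mem_orbit_self a
    by_cases hfix : π.1 a = a
    · rw [hfix]; exact mem_orbit_self a
    have hπa : π.1 a ∉ A := fun h' ↦ hfix (π.1.injective (hπ _ h'))
    exact ⟨⟨swap a (π.1 a), Subgroup.subset_closure ⟨a, ha, π.1 a, hπa, Ne.symm hfix, rfl⟩⟩,
      swap_apply_left a (π.1 a)⟩
  exact mem_stabilizerPerm.1 (hSle ((mem_closure_isSwap hS).2 ⟨π.2, horbit⟩))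

theorem NSupports.inter (hA : NSupports 𝔸 A x) (hB : NSupports 𝔸 B x)
    (hAB : (A ∪ B)ᶜ.Nonempty) : NSupports 𝔸 (A ∩ B) x := by
  obtain ⟨c, hc⟩ := hAB
  rw [Set.mem_compl_iff, Set.mem_union, not_or] at hc
  have hswap_c : ∀ a ∉ A ∩ B, swap a c ∈ stabilizerPerm x := by
    intro a ha
    rcases not_and_or.1 ha with haA | haB
    · exact hA.swap_mem_stabilizerPerm haA hc.1
    · exact hB.swap_mem_stabilizerPerm haB hc.2
  exact nsupports_of_swap_mem_stabilizerPerm fun a ha b hb ↦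
    SubmonoidClass.swap_mem_trans _ (hswap_c a ha) (swap_comm b c ▸ hswap_c b hb)

end Supports

theorem stmt_2 {𝔸 X : Type*} [Infinite 𝔸] [DecidableEq 𝔸] [MulAction (FinPerm 𝔸) X]
    (x : X) {I : Type*} [Nonempty I] (A : I → Set 𝔸)
    (hfin : ∀ i, (A i).Finite) (hsupp : ∀ i, NSupports 𝔸 (A i) x) :
    (⋂ i, A i).Finite ∧ NSupports 𝔸 (⋂ i, A i) x := by
  obtain ⟨i₀⟩ := ‹Nonempty I›
  have hsub_fin : ∀ s ⊆ A i₀, s.Finite := fun s hs ↦ (hfin i₀).subset hs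
  refine ⟨hsub_fin _ (Set.iInter_subset A i₀), ?_⟩
  refine (hfin i₀).iInter_of_forall_inter (P := (NSupports 𝔸 · x)) hsupp fun s hs hsx i ↦ ?_
  exact hsx.inter (hsupp i) ((hsub_fin s hs).union (hfin i)).infinite_compl.nonempty
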